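/- If a is a positive non-integer dyadic rational in canonical form, then l(a^R) ≤ l(a), where l denotes left-length; symmetrically, if a is a negative non-integer dyadic rational, then r(a^L) ≤ r(a). -/

import Mathlib

namespace SetTheory

section PGameDefs

universe u

/-- The old Mathlib `SetTheory.PGame` (removed from Mathlib), reproduced verbatim. -/
inductive PGame : Type (u + 1)
  | mk : ∀ α β : Type u, (α → PGame) → (β → PGame) → PGame

namespace PGame

def LeftMoves : PGame → Type u
  | mk l _ _ _ => l

def RightMoves : PGame → Type u
  | mk _ r _ _ => r

def moveLeft : ∀ g : PGame, LeftMoves g → PGame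
  | mk _l _ L _ => L

def moveRight : ∀ g : PGame, RightMoves g → PGame
  | mk _ _r _ R => R

inductive IsOption : PGame → PGame → Prop
  | moveLeft {x : PGame} (i : x.LeftMoves) : IsOption (x.moveLeft i) x
  | moveRight {x : PGame} (i : x.RightMoves) : IsOption (x.moveRight i) x

instance : Zero PGame :=
  ⟨⟨PEmpty, PEmpty, PEmpty.elim, PEmpty.elim⟩⟩

def neg : PGame → PGame
  | ⟨l, r, L, R⟩ => ⟨r, l, fun i => neg (R i), fun i => neg (L i)⟩

instance : Neg PGame :=
  ⟨neg⟩

noncomputable instance : Add PGame.{u} where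
  add x y := by
    induction x generalizing y with | mk xl xr _ _ IHxl IHxr => _
    induction y with | mk yl yr yL yR IHyl IHyr => _
    have y := mk yl yr yL yR
    refine ⟨xl ⊕ yl, xr ⊕ yr, Sum.rec ?_ ?_, Sum.rec ?_ ?_⟩
    · exact fun i => IHxl i y
    · exact IHyl
    · exact fun i => IHxr i y
    · exact @IHyr

end PGame

end PGameDefs

end SetTheory

open SetTheory

namespace Misere

/-- `F` is a follower of `G`: reachable from `G` by a (possibly empty) sequence of moves. -/
def Follower (F G : PGame) : Prop := Relation.ReflTransGen PGame.IsOption F G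

def IsLeftEnd (G : PGame) : Prop := IsEmpty G.LeftMoves
def IsRightEnd (G : PGame) : Prop := IsEmpty G.RightMoves

/-- A dead left end: every follower (including itself) is a left end. -/
def DeadLeftEnd (G : PGame) : Prop := ∀ F, Follower F G → IsLeftEnd F
def DeadRightEnd (G : PGame) : Prop := ∀ F, Follower F G → IsRightEnd F
def DeadEnd (G : PGame) : Prop := DeadLeftEnd G ∨ DeadRightEnd G

/-- A game is dead-ending if every end follower is a dead end. -/
def DeadEnding (G : PGame) : Prop :=
  ∀ F, Follower F G → (IsLeftEnd F → DeadLeftEnd F) ∧ (IsRightEnd F → DeadRightEnd F)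

/-- The universe of dead-ending games. -/
def E : Set PGame := {G | DeadEnding G}

/-- `(misereWins G).1` : Left, moving first, wins `G` under misère play;
    `(misereWins G).2` : Right, moving first, wins `G` under misère play. -/
def misereWins : PGame → Prop × Prop
  | PGame.mk l r L R =>
      (IsEmpty l ∨ ∃ i, ¬ (misereWins (L i)).2,
       IsEmpty r ∨ ∃ j, ¬ (misereWins (R j)).1)

def LeftWinsGF (G : PGame) : Prop := (misereWins G).1
def RightWinsGF (G : PGame) : Prop := (misereWins G).2

inductive MOutcome : Type
  | L | N | P | R
deriving DecidableEq

/-- Partial order on misère outcomes: `R` minimal, `L` maximal, `N` and `P` incomparable. -/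
def MOutcome.le : MOutcome → MOutcome → Prop
  | .R, _ => True
  | _, .L => True
  | a, b => a = b

instance : LE MOutcome := ⟨MOutcome.le⟩

/-- The misère outcome of a game. -/
noncomputable def outcome (G : PGame) : MOutcome := by
  classical
  exact if LeftWinsGF G then (if RightWinsGF G then .N else .L)
        else (if RightWinsGF G then .R else .P)

/-- `G ≡ H (mod U)`. -/
def equivMod (U : Set PGame) (G H : PGame) : Prop :=
  ∀ X ∈ U, outcome (G + X) = outcome (H + X)

/-- `G ≧ H (mod U)`. -/
def geMod (U : Set PGame) (G H : PGame) : Prop :=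
  ∀ X ∈ U, outcome (H + X) ≤ outcome (G + X)

/-- `LeftChain G n`: there is a sequence of `n` consecutive Left moves from `G`
ending at the zero position. -/
inductive LeftChain : PGame → ℕ → Prop
  | zero (G : PGame) : IsLeftEnd G → IsRightEnd G → LeftChain G 0
  | succ (G : PGame) (i : G.LeftMoves) (n : ℕ) :
      LeftChain (G.moveLeft i) n → LeftChain G (n + 1)

inductive RightChain : PGame → ℕ → Prop
  | zero (G : PGame) : IsLeftEnd G → IsRightEnd G → RightChain G 0
  | succ (G : PGame) (j : G.RightMoves) (n : ℕ) :
      RightChain (G.moveRight j) n → RightChain G (n + 1)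

/-- Left-length: minimum number of consecutive Left moves needed to reach zero. -/
noncomputable def leftLength (G : PGame) : ℕ := sInf {n | LeftChain G n}

/-- Right-length: minimum number of consecutive Right moves needed to reach zero. -/
noncomputable def rightLength (G : PGame) : ℕ := sInf {n | RightChain G n}

/-- Normal-play canonical form of a nonnegative integer. -/
def natGame : ℕ → PGame
  | 0 => 0
  | n + 1 => PGame.mk PUnit PEmpty (fun _ => natGame n) PEmpty.elim

/-- Normal-play canonical form of an integer (negatives are conjugates). -/
def intGame (n : ℤ) : PGame :=
  if 0 ≤ n then natGame n.toNat else -natGame (-n).toNat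

/-- Normal-play canonical form of the dyadic rational `m / 2 ^ j`. -/
def dyadicGame : ℤ → ℕ → PGame
  | m, 0 => intGame m
  | m, j + 1 =>
      if m % 2 = 0 then dyadicGame (m / 2) j
      else PGame.mk PUnit PUnit (fun _ => dyadicGame ((m - 1) / 2) j)
            (fun _ => dyadicGame ((m + 1) / 2) j)

/-- The closure of dead ends: finite disjunctive sums of dead ends. -/
def DeadEndClosure : Set PGame :=
  {G | ∃ l : List PGame, (∀ x ∈ l, DeadEnd x) ∧ G = l.sum}

end Misere

open Misere SetTheory PGame

/-! Every dyadic position with nonnegative numerator has at most one Left option, so its chain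
of Left moves down to `0` is unique and its left-length obeys the recursion `dyadicLeftLength`
read off from `dyadicGame`. For `a = m / 2 ^ (j + 1)` with `m` odd and `k = (m - 1) / 2`, the
options are `a^L = k / 2 ^ j` and `a^R = (k + 1) / 2 ^ j`, and `l(a) = l(a^L) + 1`; so it suffices
that adding `1 / 2 ^ j` raises the left-length by at most one, a carry argument in binary.
The right-hand half is the mirror image. -/

namespace Misere

universe u

section Chains

variable {G : PGame.{u}} {n c : ℕ}

theorem leftChain_zero_iff : LeftChain G 0 ↔ IsLeftEnd G ∧ IsRightEnd G := by
  refine ⟨fun h => ?_, fun h => .zero G h.1 h.2⟩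
  cases h
  exact ⟨‹_›, ‹_›⟩

theorem leftChain_succ_iff : LeftChain G (n + 1) ↔ ∃ i, LeftChain (G.moveLeft i) n := by
  refine ⟨fun h => ?_, fun ⟨i, h⟩ => .succ G i n h⟩
  cases h
  exact ⟨_, ‹_›⟩

theorem rightChain_zero_iff : RightChain G 0 ↔ IsLeftEnd G ∧ IsRightEnd G := by
  refine ⟨fun h => ?_, fun h => .zero G h.1 h.2⟩
  cases h
  exact ⟨‹_›, ‹_›⟩

theorem rightChain_succ_iff : RightChain G (n + 1) ↔ ∃ j, RightChain (G.moveRight j) n := by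
  refine ⟨fun h => ?_, fun ⟨j, h⟩ => .succ G j n h⟩
  cases h
  exact ⟨_, ‹_›⟩

theorem leftChain_iff_of_isEmpty (hL : IsLeftEnd G) (hR : IsRightEnd G) :
    LeftChain G c ↔ c = 0 := by
  cases c with
  | zero => exact iff_of_true (.zero G hL hR) rfl
  | succ c =>
    exact iff_of_false (fun h => (leftChain_succ_iff.1 h).elim fun i _ => hL.false i) (by omega)

theorem rightChain_iff_of_isEmpty (hL : IsLeftEnd G) (hR : IsRightEnd G) :
    RightChain G c ↔ c = 0 := by
  cases c with
  | zero => exact iff_of_true (.zero G hL hR) rfl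
  | succ c =>
    exact iff_of_false (fun h => (rightChain_succ_iff.1 h).elim fun j _ => hR.false j) (by omega)

theorem leftChain_iff_of_unique (i : G.LeftMoves) (hi : ∀ i', i' = i)
    (h : ∀ c, LeftChain (G.moveLeft i) c ↔ c = n) : LeftChain G c ↔ c = n + 1 := by
  cases c with
  | zero => exact iff_of_false (fun h0 => (leftChain_zero_iff.1 h0).1.false i) (by omega)
  | succ c =>
    rw [leftChain_succ_iff, Nat.add_right_cancel_iff, ← h]
    exact ⟨fun ⟨i', h'⟩ => hi i' ▸ h', fun h' => ⟨i, h'⟩⟩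

theorem rightChain_iff_of_unique (j : G.RightMoves) (hj : ∀ j', j' = j)
    (h : ∀ c, RightChain (G.moveRight j) c ↔ c = n) : RightChain G c ↔ c = n + 1 := by
  cases c with
  | zero => exact iff_of_false (fun h0 => (rightChain_zero_iff.1 h0).2.false j) (by omega)
  | succ c =>
    rw [rightChain_succ_iff, Nat.add_right_cancel_iff, ← h]
    exact ⟨fun ⟨j', h'⟩ => hj j' ▸ h', fun h' => ⟨j, h'⟩⟩

theorem leftLength_eq_of_leftChain_iff (h : ∀ c, LeftChain G c ↔ c = n) : leftLength G = n := by
  simp only [leftLength, h, Set.ofPred_eq_eq_singleton, csInf_singleton]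

theorem rightLength_eq_of_rightChain_iff (h : ∀ c, RightChain G c ↔ c = n) :
    rightLength G = n := by
  simp only [rightLength, h, Set.ofPred_eq_eq_singleton, csInf_singleton]

theorem leftChain_natGame_iff (n : ℕ) : LeftChain (natGame n) c ↔ c = n := by
  induction n generalizing c with
  | zero => exact leftChain_iff_of_isEmpty ⟨PEmpty.elim⟩ ⟨PEmpty.elim⟩
  | succ n ih => exact leftChain_iff_of_unique PUnit.unit (fun _ => rfl) fun _ => ih

theorem rightChain_neg_natGame_iff (n : ℕ) : RightChain (-natGame n) c ↔ c = n := by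
  induction n generalizing c with
  | zero => exact rightChain_iff_of_isEmpty ⟨PEmpty.elim⟩ ⟨PEmpty.elim⟩
  | succ n ih => exact rightChain_iff_of_unique PUnit.unit (fun _ => rfl) fun _ => ih

end Chains

section DyadicGame

variable {k : ℤ} {j : ℕ}

theorem dyadicGame_succ_of_even (h : k % 2 = 0) :
    dyadicGame k (j + 1) = dyadicGame (k / 2) j := by
  rw [dyadicGame, if_pos h]

theorem dyadicGame_succ_of_odd (h : k % 2 = 1) :
    dyadicGame k (j + 1) = PGame.mk PUnit PUnit (fun _ => dyadicGame ((k - 1) / 2) j)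
      (fun _ => dyadicGame ((k + 1) / 2) j) := by
  rw [dyadicGame, if_neg (by omega)]

theorem moveLeft_dyadicGame_succ_of_odd (h : k % 2 = 1)
    (i : (dyadicGame k (j + 1)).LeftMoves) :
    (dyadicGame k (j + 1)).moveLeft i = dyadicGame ((k - 1) / 2) j := by
  revert i
  rw [dyadicGame_succ_of_odd h]
  exact fun _ => rfl

theorem moveRight_dyadicGame_succ_of_odd (h : k % 2 = 1)
    (i : (dyadicGame k (j + 1)).RightMoves) :
    (dyadicGame k (j + 1)).moveRight i = dyadicGame ((k + 1) / 2) j := by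
  revert i
  rw [dyadicGame_succ_of_odd h]
  exact fun _ => rfl

end DyadicGame

def dyadicLeftLength : ℤ → ℕ → ℕ
  | k, 0 => k.toNat
  | k, j + 1 =>
      if k % 2 = 0 then dyadicLeftLength (k / 2) j else dyadicLeftLength ((k - 1) / 2) j + 1

def dyadicRightLength : ℤ → ℕ → ℕ
  | k, 0 => (-k).toNat
  | k, j + 1 =>
      if k % 2 = 0 then dyadicRightLength (k / 2) j else dyadicRightLength ((k + 1) / 2) j + 1

theorem dyadicLeftLength_add_one_le (k : ℤ) (j : ℕ) :
    dyadicLeftLength (k + 1) j ≤ dyadicLeftLength k j + 1 := by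
  induction j generalizing k with
  | zero => simp only [dyadicLeftLength]; omega
  | succ j ih =>
    by_cases hk : k % 2 = 0
    · rw [dyadicLeftLength, dyadicLeftLength, if_pos hk, if_neg (by omega),
        show (k + 1 - 1) / 2 = k / 2 by omega]
    · rw [dyadicLeftLength, dyadicLeftLength, if_neg hk, if_pos (by omega),
        show (k + 1) / 2 = (k - 1) / 2 + 1 by omega]
      exact (ih _).trans (Nat.le_succ _)

theorem dyadicRightLength_sub_one_le (k : ℤ) (j : ℕ) :
    dyadicRightLength (k - 1) j ≤ dyadicRightLength k j + 1 := by
  induction j generalizing k with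
  | zero => simp only [dyadicRightLength]; omega
  | succ j ih =>
    by_cases hk : k % 2 = 0
    · rw [dyadicRightLength, dyadicRightLength, if_pos hk, if_neg (by omega),
        show (k - 1 + 1) / 2 = k / 2 by omega]
    · rw [dyadicRightLength, dyadicRightLength, if_neg hk, if_pos (by omega),
        show (k - 1) / 2 = (k + 1) / 2 - 1 by omega]
      exact (ih _).trans (Nat.le_succ _)

theorem leftChain_dyadicGame_iff {k : ℤ} (hk : 0 ≤ k) (j : ℕ) {c : ℕ} :
    LeftChain (dyadicGame k j) c ↔ c = dyadicLeftLength k j := by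
  induction j generalizing k c with
  | zero =>
    rw [dyadicGame, intGame, if_pos hk, dyadicLeftLength]
    exact leftChain_natGame_iff _
  | succ j ih =>
    rcases Int.emod_two_eq_zero_or_one k with h | h
    · rw [dyadicGame_succ_of_even h, dyadicLeftLength, if_pos h]
      exact ih (by omega)
    · rw [dyadicGame_succ_of_odd h, dyadicLeftLength, if_neg (by omega)]
      exact leftChain_iff_of_unique PUnit.unit (fun _ => rfl) fun _ => ih (by omega)

theorem rightChain_dyadicGame_iff {k : ℤ} (hk : k ≤ 0) (j : ℕ) {c : ℕ} :
    RightChain (dyadicGame k j) c ↔ c = dyadicRightLength k j := by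
  induction j generalizing k c with
  | zero =>
    rw [dyadicGame, intGame, dyadicRightLength]
    split_ifs with h0
    · rw [show k = 0 by omega]
      exact rightChain_iff_of_isEmpty ⟨PEmpty.elim⟩ ⟨PEmpty.elim⟩
    · exact rightChain_neg_natGame_iff _
  | succ j ih =>
    rcases Int.emod_two_eq_zero_or_one k with h | h
    · rw [dyadicGame_succ_of_even h, dyadicRightLength, if_pos h]
      exact ih (by omega)
    · rw [dyadicGame_succ_of_odd h, dyadicRightLength, if_neg (by omega)]
      exact rightChain_iff_of_unique PUnit.unit (fun _ => rfl) fun _ => ih (by omega)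

theorem leftLength_dyadicGame {k : ℤ} (hk : 0 ≤ k) (j : ℕ) :
    leftLength (dyadicGame k j) = dyadicLeftLength k j :=
  leftLength_eq_of_leftChain_iff fun _ => leftChain_dyadicGame_iff hk j

theorem rightLength_dyadicGame {k : ℤ} (hk : k ≤ 0) (j : ℕ) :
    rightLength (dyadicGame k j) = dyadicRightLength k j :=
  rightLength_eq_of_rightChain_iff fun _ => rightChain_dyadicGame_iff hk j

end Misere

open Misere SetTheory PGame

/-- for a positive non-integer canonical dyadic a, l(a^R) ≤ l(a);
for a negative one, r(a^L) ≤ r(a). -/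
theorem stmt12 (m : ℤ) (j : ℕ) (hodd : Odd m) (hj : 0 < j) :
    (0 < m → ∀ ir : (dyadicGame m j).RightMoves,
      leftLength ((dyadicGame m j).moveRight ir) ≤ leftLength (dyadicGame m j)) ∧
    (m < 0 → ∀ il : (dyadicGame m j).LeftMoves,
      rightLength ((dyadicGame m j).moveLeft il) ≤ rightLength (dyadicGame m j)) := by
  obtain ⟨j, rfl⟩ := Nat.exists_eq_add_one_of_ne_zero hj.ne'
  have hm : m % 2 = 1 := Int.odd_iff.mp hodd
  refine ⟨fun hpos ir => ?_, fun hneg il => ?_⟩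
  · rw [moveRight_dyadicGame_succ_of_odd hm, leftLength_dyadicGame (by omega),
      leftLength_dyadicGame hpos.le, dyadicLeftLength, if_neg (by omega),
      show (m + 1) / 2 = (m - 1) / 2 + 1 by omega]
    exact dyadicLeftLength_add_one_le _ _
  · rw [moveLeft_dyadicGame_succ_of_odd hm, rightLength_dyadicGame (by omega),
      rightLength_dyadicGame hneg.le, dyadicRightLength, if_neg (by omega),
      show (m - 1) / 2 = (m + 1) / 2 - 1 by omega]
    exact dyadicRightLength_sub_one_le _ _
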